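/- Let λ > 0 and x ∈ ℝ, and let F(t) = (2λ/(2λ + log(1+λt)))·(1 + log(1+λt)/λ)^x. Then for every integer N ≥ 1 and every real t with 1 + λt > 0, 2λ + log(1+λt) > 0 and λ + log(1+λt) > 0, the N-th derivative of F at t satisfies F^{(N)}(t) = λ^N (1+λt)^{−N} · ( Σ_{r=1}^{N} Σ_{i=0}^{r} a_{i,r−i}(N,x) · (2λ + log(1+λt))^{−i} · (λ + log(1+λt))^{−(r−i)} ) · F(t), where a_{i,r−i}(N,x) = (−1)^{N+i−r} · i! · S_{1,i−1}(r−i) · (N−1)! · H_{N−1,r−1} · (x)_{r−i}. -/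

import Mathlib

/-!
Put `u = log (1 + λt)`, `A = 2λ + u`, `B = λ + u` and `g(u) = 2λ/A · (1 + u/λ)^x`, so that
`F(t) = g(log (1 + λt))`. Since `d/dt = λ/(1 + λt) · d/du`, induction on `N` gives
`F^{(N)}(t) = λ^N (1 + λt)^{-N} ∑_r s(N, r) g^{(r)}(u)`, where `s(N, r)` are the coefficients
of the falling factorial `X(X - 1)⋯(X - N + 1)`, i.e. the signed Stirling numbers of the first
kind; comparing recurrences, `s(N, r) = (-1)^{N-r} (N-1)! H_{N-1,r-1}`. By Leibniz' rule
`g^{(r)} = ∑_i C(r, i) (-1)^i i! (x)_{r-i} A^{-i} B^{-(r-i)} g`, and `C(r, i) = S_{1,i-1}(r-i)`.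
-/

open Finset

/-- Generalized Changhee power sums with shifted index: `genChangheeS j N = S_{1,j-1}(N)`,
so that `genChangheeS 0 N = S_{1,-1}(N) = 1`, `genChangheeS 1 N = S_{1,0}(N) = N + 1`,
and `genChangheeS (j+2) N = S_{1,j+1}(N) = ∑_{l=0}^{N} S_{1,j}(l)`. -/
def genChangheeS : ℕ → ℕ → ℚ
  | 0, _ => 1
  | 1, N => N + 1
  | (j+2), N => ∑ l ∈ Finset.range (N+1), genChangheeS (j+1) l

/-- Generalized harmonic numbers `H_{N,j}`: `H_{N,0} = 1`,
`H_{N,1} = 1 + 1/2 + ⋯ + 1/N`, and `H_{N,j} = ∑_{l=j}^{N} H_{l-1,j-1}/l` for `j ≥ 2`. -/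
def genHarmonic : ℕ → ℕ → ℚ
  | _, 0 => 1
  | N, 1 => ∑ i ∈ Finset.range N, (1 : ℚ) / (i + 1)
  | N, (j+2) => ∑ l ∈ Finset.Icc (j+2) N, genHarmonic (l-1) (j+1) / l
termination_by N j => j

/-- Falling factorial `(x)_n = x(x-1)⋯(x-n+1)`, with `(x)_0 = 1`. -/
noncomputable def fallingFactorial (x : ℝ) (n : ℕ) : ℝ := ∏ i ∈ Finset.range n, (x - i)

open Polynomial Real Filter Topology

theorem genChangheeS_eq_choose (i N : ℕ) : genChangheeS i N = ((i + N).choose i : ℚ) := by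
  match i with
  | 0 => simp [genChangheeS]
  | 1 => simp [genChangheeS, add_comm]
  | j + 2 =>
    induction N with
    | zero => simp [genChangheeS, genChangheeS_eq_choose (j + 1)]
    | succ N ih =>
      rw [genChangheeS, sum_range_succ, ← genChangheeS, ih, genChangheeS_eq_choose (j + 1),
        show j + 2 + (N + 1) = (j + 1 + (N + 1)) + 1 by omega, Nat.choose_succ_succ',
        show j + 1 + (N + 1) = j + 2 + N by omega]
      push_cast
      ring

theorem genHarmonic_eq_zero {N k : ℕ} (h : N < k) : genHarmonic N k = 0 := by
  match k with
  | 1 =>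
    obtain rfl : N = 0 := by omega
    simp [genHarmonic]
  | j + 2 => rw [genHarmonic, Icc_eq_empty (by omega), sum_empty]

theorem genHarmonic_succ_succ (N k : ℕ) :
    genHarmonic (N + 1) (k + 1) = genHarmonic N (k + 1) + genHarmonic N k / (N + 1) := by
  match k with
  | 0 => simp [genHarmonic, sum_range_succ]
  | j + 1 =>
    by_cases h : j + 2 ≤ N + 1
    · rw [genHarmonic, sum_Icc_succ_top h, genHarmonic]
      simp
    · rw [genHarmonic_eq_zero (by omega), genHarmonic_eq_zero (by omega),
        genHarmonic_eq_zero (show N < j + 1 by omega)]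
      simp

theorem descPochhammer_coeff_succ_succ {K : Type*} [Field K] [CharZero K] (N r : ℕ) :
    (descPochhammer K (N + 1)).coeff (r + 1)
      = (-1) ^ (N + r) * N.factorial * (genHarmonic N r : K) := by
  induction N generalizing r with
  | zero =>
    rcases r with _ | r
    · simp [genHarmonic]
    · simp [genHarmonic_eq_zero (Nat.succ_pos r), coeff_X]
  | succ N ih =>
    rw [descPochhammer_succ_right, ← map_natCast C, coeff_mul_X_sub_C, ih]
    rcases r with _ | r
    · rw [coeff_zero_eq_eval_zero, descPochhammer_ne_zero_eval_zero K (by omega)]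
      simp only [add_zero, genHarmonic, Rat.cast_one, mul_one, zero_sub, Nat.factorial_succ]
      push_cast
      ring
    · rw [ih, genHarmonic_succ_succ]
      push_cast [Nat.factorial_succ]
      field_simp
      ring

theorem neg_one_pow_sub_eq_pow_add {R : Type*} [Monoid R] [HasDistribNeg R] {m n : ℕ}
    (h : n ≤ m) :
    (-1 : R) ^ (m - n) = (-1) ^ (m + n) := by
  rw [show m + n = (m - n) + 2 * n by omega, pow_add, pow_mul, neg_one_sq, one_pow, mul_one]

theorem sum_range_descPochhammer_coeff_mul {K : Type*} [Field K] [CharZero K] {N : ℕ}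
    (hN : 1 ≤ N) (f : ℕ → K) :
    ∑ r ∈ range (N + 1), (descPochhammer K N).coeff r * f r
      = ∑ r ∈ Icc 1 N,
          (-1) ^ (N - r) * (N - 1).factorial * (genHarmonic (N - 1) (r - 1) : K) * f r := by
  obtain ⟨M, rfl⟩ : ∃ M, N = M + 1 := ⟨N - 1, by omega⟩
  rw [sum_range_succ', ← Ico_add_one_right_eq_Icc, sum_Ico_eq_sum_range, coeff_zero_eq_eval_zero,
    descPochhammer_ne_zero_eval_zero K M.succ_ne_zero, zero_mul, add_zero, Nat.add_sub_cancel]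
  refine sum_congr rfl fun k hk => ?_
  rw [add_comm 1 k, descPochhammer_coeff_succ_succ, Nat.add_sub_cancel, Nat.add_sub_cancel,
    Nat.add_sub_add_right, neg_one_pow_sub_eq_pow_add (by simp at hk; omega)]

theorem sum_range_coeff_mul_X_sub_C {R : Type*} [CommRing R] {p : R[X]} {N : ℕ}
    (hp : p.natDegree ≤ N) (a : R) (v : ℕ → R) :
    ∑ r ∈ range (N + 2), (p * (X - C a)).coeff r * v r
      = ∑ r ∈ range (N + 1), p.coeff r * v (r + 1)
          - a * ∑ r ∈ range (N + 1), p.coeff r * v r := by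
  have htop : p.coeff (N + 1) = 0 := coeff_eq_zero_of_natDegree_lt (by omega)
  have hshift : ∑ r ∈ range (N + 1), p.coeff r * v r
      = ∑ r ∈ range (N + 1), p.coeff (r + 1) * v (r + 1) + p.coeff 0 * v 0 := by
    rw [sum_range_succ (fun r => p.coeff (r + 1) * v (r + 1)), htop, zero_mul, add_zero,
      sum_range_succ']
  rw [sum_range_succ' _ (N + 1), hshift, mul_add, mul_sum]
  simp only [coeff_mul_X_sub_C, mul_coeff_zero, coeff_sub, coeff_X_zero, coeff_C_zero, sub_mul,
    sum_sub_distrib]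
  have hscale : ∑ r ∈ range (N + 1), p.coeff (r + 1) * a * v (r + 1)
      = ∑ r ∈ range (N + 1), a * (p.coeff (r + 1) * v (r + 1)) :=
    sum_congr rfl fun _ _ => by ring
  rw [hscale]
  ring

section

variable {𝕜 : Type*} [NontriviallyNormedField 𝕜]

def HasDerivTowerOn (G : ℕ → 𝕜 → 𝕜) (U : Set 𝕜) : Prop :=
  ∀ n, ∀ u ∈ U, HasDerivAt (G n) (G (n + 1) u) u

theorem HasDerivTowerOn.mono {G : ℕ → 𝕜 → 𝕜} {U V : Set 𝕜} (hG : HasDerivTowerOn G U)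
    (hVU : V ⊆ U) : HasDerivTowerOn G V :=
  fun n u hu => hG n u (hVU hu)

theorem HasDerivTowerOn.mul {a b : ℕ → 𝕜 → 𝕜} {U : Set 𝕜} (ha : HasDerivTowerOn a U)
    (hb : HasDerivTowerOn b U) :
    HasDerivTowerOn
      (fun n u => ∑ i ∈ range (n + 1), (n.choose i : 𝕜) * (a i u * b (n - i) u)) U := by
  intro n u hu
  beta_reduce
  refine (HasDerivAt.fun_sum fun i _ =>
    ((ha i u hu).fun_mul (hb (n - i) u hu)).const_mul (n.choose i : 𝕜)).congr_deriv ?_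
  rw [sum_choose_succ_mul (fun i j => a i u * b j u), ← sum_add_distrib]
  refine sum_congr rfl fun i hi => ?_
  rw [Nat.sub_add_comm (mem_range_succ_iff.mp hi)]
  ring

theorem hasDerivTowerOn_div_add (c d : 𝕜) :
    HasDerivTowerOn
      (fun n u => (-1 : 𝕜) ^ n * n.factorial * (d + u) ^ (-(n : ℤ)) * (c / (d + u)))
      {u | d + u ≠ 0} := by
  intro n u (hu : d + u ≠ 0)
  beta_reduce
  have hlin : HasDerivAt (fun u => d + u) 1 u := (hasDerivAt_id' u).const_add d
  have hpow : HasDerivAt (fun u => (d + u) ^ (-(n : ℤ))) _ u :=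
    (hasDerivAt_zpow (-(n : ℤ)) (d + u) (Or.inl hu)).comp u hlin
  refine ((hpow.const_mul ((-1 : 𝕜) ^ n * n.factorial)).fun_mul
    ((hasDerivAt_const u c).fun_div hlin hu)).congr_deriv ?_
  rw [zpow_sub_one₀ hu, show -((n + 1 : ℕ) : ℤ) = -(n : ℤ) - 1 by push_cast; ring,
    zpow_sub_one₀ hu]
  push_cast [Nat.factorial_succ]
  field_simp
  ring

end section

theorem fallingFactorial_succ (x : ℝ) (n : ℕ) :
    fallingFactorial x (n + 1) = fallingFactorial x n * (x - n) :=
  prod_range_succ _ n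

theorem hasDerivTowerOn_one_add_div_rpow (x : ℝ) {l : ℝ} (hl : l ≠ 0) :
    HasDerivTowerOn (fun n u => fallingFactorial x n * (l + u) ^ (-(n : ℤ)) * (1 + u / l) ^ x)
      {u | 0 < 1 + u / l} := by
  intro n u (hu : 0 < 1 + u / l)
  beta_reduce
  have hlu : l + u ≠ 0 := by
    rw [show l + u = l * (1 + u / l) by field_simp]
    exact mul_ne_zero hl hu.ne'
  have hpow : HasDerivAt (fun u => (l + u) ^ (-(n : ℤ))) _ u :=
    (hasDerivAt_zpow (-(n : ℤ)) (l + u) (Or.inl hlu)).comp u ((hasDerivAt_id' u).const_add l)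
  have hrpow : HasDerivAt (fun u => (1 + u / l) ^ x) _ u :=
    (((hasDerivAt_id' u).div_const l).const_add 1).rpow_const (p := x) (Or.inl hu.ne')
  refine ((hpow.const_mul (fallingFactorial x n)).fun_mul hrpow).congr_deriv ?_
  rw [zpow_sub_one₀ hlu, show -((n + 1 : ℕ) : ℤ) = -(n : ℤ) - 1 by push_cast; ring,
    zpow_sub_one₀ hlu, rpow_sub_one hu.ne', fallingFactorial_succ]
  push_cast
  field_simp
  ring

theorem iteratedDeriv_comp_log_one_add_mul {G : ℕ → ℝ → ℝ} {U : Set ℝ}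
    (hG : HasDerivTowerOn G U) (hU : IsOpen U) (l : ℝ) (N : ℕ) {t : ℝ} (ht : 1 + l * t ≠ 0)
    (htU : log (1 + l * t) ∈ U) :
    iteratedDeriv N (fun s => G 0 (log (1 + l * s))) t
      = l ^ N * (1 + l * t) ^ (-(N : ℤ)) *
          ∑ r ∈ range (N + 1), (descPochhammer ℝ N).coeff r * G r (log (1 + l * t)) := by
  induction N generalizing t with
  | zero => simp
  | succ N ih =>
    have hlin : ∀ s, HasDerivAt (fun s => 1 + l * s) l s := fun s => by
      simpa using ((hasDerivAt_id s).const_mul l).const_add 1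
    have hlog : HasDerivAt (fun s => log (1 + l * s)) (l / (1 + l * t)) t := (hlin t).log ht
    have hnear : ∀ᶠ s in 𝓝 t, 1 + l * s ≠ 0 ∧ log (1 + l * s) ∈ U :=
      ((hlin t).continuousAt.eventually_ne ht).and
        (hlog.continuousAt.eventually_mem (hU.mem_nhds htU))
    have hih : iteratedDeriv N (fun s => G 0 (log (1 + l * s))) =ᶠ[𝓝 t] fun s =>
        l ^ N * (1 + l * s) ^ (-(N : ℤ)) *
          ∑ r ∈ range (N + 1), (descPochhammer ℝ N).coeff r * G r (log (1 + l * s)) :=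
      hnear.mono fun s hs => ih hs.1 hs.2
    have hpow : HasDerivAt (fun s => (1 + l * s) ^ (-(N : ℤ))) _ t :=
      HasDerivAt.comp (h₂ := fun y => y ^ (-(N : ℤ))) t
        (hasDerivAt_zpow (-(N : ℤ)) (1 + l * t) (Or.inl ht)) (hlin t)
    have hsum : HasDerivAt (fun s => ∑ r ∈ range (N + 1),
        (descPochhammer ℝ N).coeff r * G r (log (1 + l * s)))
        ((∑ r ∈ range (N + 1), (descPochhammer ℝ N).coeff r * G (r + 1) (log (1 + l * t)))
          * (l / (1 + l * t))) t := by
      refine (HasDerivAt.fun_sum fun r _ =>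
        ((hG r _ htU).comp t hlog).const_mul ((descPochhammer ℝ N).coeff r)).congr_deriv ?_
      rw [sum_mul]
      exact sum_congr rfl fun _ _ => by ring
    rw [iteratedDeriv_succ, hih.deriv_eq, ((hpow.const_mul (l ^ N)).fun_mul hsum).deriv,
      descPochhammer_succ_right, ← map_natCast C, sum_range_coeff_mul_X_sub_C (by simp),
      show -((N + 1 : ℕ) : ℤ) = -(N : ℤ) - 1 by push_cast; ring, zpow_sub_one₀ ht]
    push_cast
    ring

/-- The `N`-th derivative of `F(t) = (2λ/(2λ + log(1+λt)))·(1 + log(1+λt)/λ)^x` satisfies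
`F^{(N)}(t) = λ^N (1+λt)^{-N} · (∑_{r=1}^{N} ∑_{i=0}^{r} a_{i,r-i}(N,x)
(2λ + log(1+λt))^{-i} (λ + log(1+λt))^{-(r-i)}) · F(t)`, where
`a_{i,r-i}(N,x) = (-1)^{N+i-r} i! S_{1,i-1}(r-i) (N-1)! H_{N-1,r-1} (x)_{r-i}`. -/
theorem iteratedDeriv_changhee_gen (l x : ℝ) (hl : 0 < l) (N : ℕ) (hN : 1 ≤ N) (t : ℝ)
    (h1 : 0 < 1 + l * t) (h2 : 0 < 2 * l + Real.log (1 + l * t))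
    (h3 : 0 < l + Real.log (1 + l * t)) :
    iteratedDeriv N
        (fun s : ℝ => 2*l / (2*l + Real.log (1 + l*s)) * (1 + Real.log (1 + l*s) / l) ^ x) t
      = l ^ N * (1 + l * t) ^ (-(N : ℤ)) *
        (∑ r ∈ Finset.Icc 1 N, ∑ i ∈ Finset.range (r + 1),
          ((-1 : ℝ) ^ (N + i - r) * (Nat.factorial i : ℝ) * (genChangheeS i (r - i) : ℝ) *
              (Nat.factorial (N - 1) : ℝ) * (genHarmonic (N - 1) (r - 1) : ℝ) *
              fallingFactorial x (r - i)) *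
            (2 * l + Real.log (1 + l * t)) ^ (-(i : ℤ)) *
            (l + Real.log (1 + l * t)) ^ (-((r - i : ℕ) : ℤ))) *
        (2*l / (2*l + Real.log (1 + l*t)) * (1 + Real.log (1 + l*t) / l) ^ x) := by
  have hG := ((hasDerivTowerOn_div_add (2 * l) (2 * l)).mono Set.inter_subset_left).mul
    ((hasDerivTowerOn_one_add_div_rpow x hl.ne').mono Set.inter_subset_right)
  have hU : IsOpen ({u : ℝ | 2 * l + u ≠ 0} ∩ {u | 0 < 1 + u / l}) :=
    (isOpen_ne_fun (by fun_prop) (by fun_prop)).inter (isOpen_lt (by fun_prop) (by fun_prop))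
  have htU : log (1 + l * t) ∈ {u : ℝ | 2 * l + u ≠ 0} ∩ {u | 0 < 1 + u / l} :=
    ⟨h2.ne', show 0 < 1 + log (1 + l * t) / l by rw [one_add_div hl.ne']; positivity⟩
  -- `F = G 0 ∘ log (1 + l ·)` for the product tower `G` of `hG`
  refine (congrArg (fun f => iteratedDeriv N f t) (funext fun s => ?_)).trans
    ((iteratedDeriv_comp_log_one_add_mul hG hU l N h1.ne' htU).trans ?_)
  · simp [fallingFactorial]
  rw [mul_assoc (l ^ N * (1 + l * t) ^ (-(N : ℤ))), sum_range_descPochhammer_coeff_mul hN,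
    sum_mul]
  congr 1
  refine sum_congr rfl fun r hr => ?_
  rw [mul_sum, sum_mul]
  refine sum_congr rfl fun i hi => ?_
  have hir : i ≤ r := mem_range_succ_iff.mp hi
  rw [genChangheeS_eq_choose, Nat.add_sub_cancel' hir,
    show N + i - r = N - r + i by simp at hr; omega, pow_add]
  push_cast
  ring
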